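/- Let σ > 0, r > 0, β ∈ ℝ, λ ∈ (0,1) and τ₁ ∈ ℝ. Set q_A = Φᶜ(τ₁/σ), q_B = Φᶜ((τ₁ + β)/(r·σ)) and q_M = λ·q_A + (1−λ)·q_B, and let E[D] = (q_A − q_B)/q_M denote the expected fairness metric. Then E[D] > 0 if and only if (r−1)·τ₁ − β < 0, and E[D] < 0 if and only if (r−1)·τ₁ − β > 0. -/

import Mathlib

open MeasureTheory ProbabilityTheory Real

/-- Standard normal density. -/
noncomputable def stdPdf (x : ℝ) : ℝ := (Real.sqrt (2 * Real.pi))⁻¹ * Real.exp (-(x ^ 2) / 2)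

/-- Standard normal CDF. -/
noncomputable def stdCdf (x : ℝ) : ℝ := ∫ u in Set.Iic x, stdPdf u

/-- Standard normal complementary CDF. -/
noncomputable def stdCcdf (x : ℝ) : ℝ := 1 - stdCdf x

/-- Standard normal hazard rate. -/
noncomputable def hazard (x : ℝ) : ℝ := stdPdf x / stdCcdf x

/-! Φᶜ is positive, so the denominator `q_M` is positive and `E[D]` has the sign of `q_A − q_B`.
Since Φᶜ is strictly decreasing, `q_A > q_B` exactly when the standardized thresholds satisfy
`τ₁/σ < (τ₁+β)/(rσ)`, and `τ₁/σ − (τ₁+β)/(rσ) = ((r−1)τ₁ − β)/(rσ)` with `rσ > 0`. -/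

lemma stdPdf_eq_gaussianPDFReal : stdPdf = gaussianPDFReal 0 1 := by
  funext x
  simp [stdPdf, gaussianPDFReal]

lemma stdPdf_pos (x : ℝ) : 0 < stdPdf x := by
  rw [stdPdf_eq_gaussianPDFReal]
  exact gaussianPDFReal_pos 0 1 x one_ne_zero

lemma integrable_stdPdf : Integrable stdPdf := by
  rw [stdPdf_eq_gaussianPDFReal]
  exact integrable_gaussianPDFReal 0 1

lemma integral_stdPdf : ∫ x, stdPdf x = 1 := by
  rw [stdPdf_eq_gaussianPDFReal]
  exact integral_gaussianPDFReal_eq_one 0 one_ne_zero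

lemma stdCdf_le_one (x : ℝ) : stdCdf x ≤ 1 :=
  integral_stdPdf ▸
    setIntegral_le_integral integrable_stdPdf (ae_of_all _ fun u => (stdPdf_pos u).le)

lemma stdCdf_sub_stdCdf (x y : ℝ) : stdCdf y - stdCdf x = ∫ u in x..y, stdPdf u :=
  intervalIntegral.integral_Iic_sub_Iic integrable_stdPdf.integrableOn integrable_stdPdf.integrableOn

lemma stdCdf_strictMono : StrictMono stdCdf := fun x y hxy => by
  have hpos : 0 < ∫ u in x..y, stdPdf u :=
    intervalIntegral.intervalIntegral_pos_of_pos integrable_stdPdf.intervalIntegrable stdPdf_pos hxy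
  linarith [stdCdf_sub_stdCdf x y]

lemma stdCcdf_strictAnti : StrictAnti stdCcdf := fun _ _ hxy =>
  sub_lt_sub_left (stdCdf_strictMono hxy) 1

lemma stdCcdf_pos (x : ℝ) : 0 < stdCcdf x :=
  sub_pos.2 ((stdCdf_strictMono (lt_add_one x)).trans_le (stdCdf_le_one (x + 1)))

/-- Direction of expected unfairness under delegation. With group A's signal `N(0,σ²)` and
group B's signal `N(−β, r²σ²)`, set `q_A = Φᶜ(τ₁/σ)`, `q_B = Φᶜ((τ₁+β)/(rσ))` and
`q_M = λ·q_A + (1−λ)·q_B`. Then `E[D] = (q_A − q_B)/q_M` is positive iff `(r−1)·τ₁ − β < 0`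
and negative iff `(r−1)·τ₁ − β > 0`. -/
theorem expected_fairness_sign
    (σ r β lam τ₁ : ℝ) (hσ : 0 < σ) (hr : 0 < r) (hlam : lam ∈ Set.Ioo (0 : ℝ) 1) :
    (0 < (stdCcdf (τ₁ / σ) - stdCcdf ((τ₁ + β) / (r * σ)))
          / (lam * stdCcdf (τ₁ / σ) + (1 - lam) * stdCcdf ((τ₁ + β) / (r * σ)))
        ↔ (r - 1) * τ₁ - β < 0) ∧
    ((stdCcdf (τ₁ / σ) - stdCcdf ((τ₁ + β) / (r * σ)))
          / (lam * stdCcdf (τ₁ / σ) + (1 - lam) * stdCcdf ((τ₁ + β) / (r * σ))) < 0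
        ↔ 0 < (r - 1) * τ₁ - β) := by
  obtain ⟨hlam₀, hlam₁⟩ := hlam
  set a := τ₁ / σ
  set b := (τ₁ + β) / (r * σ)
  have hden : 0 < lam * stdCcdf a + (1 - lam) * stdCcdf b :=
    add_pos (mul_pos hlam₀ (stdCcdf_pos a)) (mul_pos (sub_pos.2 hlam₁) (stdCcdf_pos b))
  have hrσ : 0 < r * σ := mul_pos hr hσ
  have hgap : a - b = ((r - 1) * τ₁ - β) / (r * σ) := by
    simp only [a, b]
    field_simp
    ring
  constructor
  · rw [div_pos_iff_of_pos_right hden, sub_pos, stdCcdf_strictAnti.lt_iff_gt, ← sub_neg (a := a),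
      hgap, div_lt_iff₀ hrσ, zero_mul]
  · rw [div_lt_iff₀ hden, zero_mul, sub_neg, stdCcdf_strictAnti.lt_iff_gt, ← sub_pos (a := a),
      hgap, div_pos_iff_of_pos_right hrσ]
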